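/- Let (X,e) be a quasi-metric space and T : X → X continuous. Then the topological entropy of T with respect to the metric d_e(x,y) = (e(x,y)+e(y,x))/2 equals the topological entropy h'_e(T) of T with respect to the quasi-metric e: h_{d_e}(T) = h'_e(T). -/
import Mathlib


open Filter Set
open scoped ENNReal

variable {X : Type*}

/-- A quasi-metric: nonnegative, vanishing exactly on the diagonal, triangle
inequality; symmetry is NOT assumed. -/
def IsQuasiMetric (e : X → X → ℝ) : Prop :=
  (∀ x y, 0 ≤ e x y) ∧ (∀ x y, e x y = 0 ↔ x = y) ∧ (∀ x y z, e x z ≤ e x y + e y z)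

/-- The dynamical distance `e_n(x,y) = max_{0 ≤ i ≤ n-1} e(T^i x, T^i y)`. -/
noncomputable def dynDist (e : X → X → ℝ) (T : X → X) (n : ℕ) (x y : X) : ℝ :=
  ⨆ i : Fin n, e (T^[(i : ℕ)] x) (T^[(i : ℕ)] y)

/-- The symmetric ball `B(x,e,ε) = {y : e(x,y) < ε ∧ e(y,x) < ε}`. -/
def qball (e : X → X → ℝ) (x : X) (ε : ℝ) : Set X := {y | e x y < ε ∧ e y x < ε}

/-- The topology generated by symmetric `e`-balls. -/
def qtop (e : X → X → ℝ) : TopologicalSpace X :=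
  TopologicalSpace.generateFrom {B | ∃ x ε, 0 < ε ∧ B = qball e x ε}

/-- The topology generated by the open balls of a (symmetric) distance `d`. -/
def mtop (d : X → X → ℝ) : TopologicalSpace X :=
  TopologicalSpace.generateFrom {B | ∃ x ε, 0 < ε ∧ B = {y | d x y < ε}}

/-- `(n,ε)`-spanning set of `K` w.r.t. the quasi-metric `e` and `T` (primed version:
both `e_n(x,y) ≤ ε` and `e_n(y,x) ≤ ε`). -/
def IsSpan (e : X → X → ℝ) (T : X → X) (n : ℕ) (ε : ℝ) (K F : Set X) : Prop :=
  ∀ x ∈ K, ∃ y ∈ F, dynDist e T n x y ≤ ε ∧ dynDist e T n y x ≤ ε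

/-- `(n,ε)`-separated set w.r.t. `e` and `T` (primed version: `e_n(x,y) > ε` OR
`e_n(y,x) > ε` for distinct points). -/
def IsSep (e : X → X → ℝ) (T : X → X) (n : ℕ) (ε : ℝ) (E : Set X) : Prop :=
  ∀ x ∈ E, ∀ y ∈ E, x ≠ y → ε < dynDist e T n x y ∨ ε < dynDist e T n y x

/-- `r'_n(ε,K,T)`: smallest cardinality of an `(n,ε)`-spanning set of `K`. -/
noncomputable def spanCard (e : X → X → ℝ) (T : X → X) (n : ℕ) (ε : ℝ) (K : Set X) : ℕ∞ :=
  ⨅ (F : Set X) (_ : IsSpan e T n ε K F), F.encard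

/-- `s'_n(ε,K,T)`: largest cardinality of an `(n,ε)`-separated subset of `K`. -/
noncomputable def sepCard (e : X → X → ℝ) (T : X → X) (n : ℕ) (ε : ℝ) (K : Set X) : ℕ∞ :=
  ⨆ (E : Set X) (_ : E ⊆ K ∧ IsSep e T n ε E), E.encard

/-- `(ε,n)`-spanning set (double-primed version: `e_n(x,y) ≤ ε` OR `e_n(y,x) ≤ ε`). -/
def IsSpanOr (e : X → X → ℝ) (T : X → X) (n : ℕ) (ε : ℝ) (K F : Set X) : Prop :=
  ∀ x ∈ K, ∃ y ∈ F, dynDist e T n x y ≤ ε ∨ dynDist e T n y x ≤ ε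

/-- `(ε,n)`-separated set (double-primed version: `e_n(x,y) > ε` AND `e_n(y,x) > ε`). -/
def IsSepAnd (e : X → X → ℝ) (T : X → X) (n : ℕ) (ε : ℝ) (E : Set X) : Prop :=
  ∀ x ∈ E, ∀ y ∈ E, x ≠ y → ε < dynDist e T n x y ∧ ε < dynDist e T n y x

/-- `r''_n(ε,K,T)`. -/
noncomputable def spanCardOr (e : X → X → ℝ) (T : X → X) (n : ℕ) (ε : ℝ) (K : Set X) : ℕ∞ :=
  ⨅ (F : Set X) (_ : IsSpanOr e T n ε K F), F.encard

/-- `s''_n(ε,K,T)`. -/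
noncomputable def sepCardAnd (e : X → X → ℝ) (T : X → X) (n : ℕ) (ε : ℝ) (K : Set X) : ℕ∞ :=
  ⨆ (E : Set X) (_ : E ⊆ K ∧ IsSepAnd e T n ε E), E.encard

/-- `(n,ε)`-spanning set of `K` w.r.t. a (symmetric) metric `d` and `T`. -/
def IsMSpan (d : X → X → ℝ) (T : X → X) (n : ℕ) (ε : ℝ) (K F : Set X) : Prop :=
  ∀ x ∈ K, ∃ y ∈ F, dynDist d T n x y ≤ ε

/-- `r_n(ε,K,T,d)` for a metric `d`. -/
noncomputable def mSpanCard (d : X → X → ℝ) (T : X → X) (n : ℕ) (ε : ℝ) (K : Set X) : ℕ∞ :=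
  ⨅ (F : Set X) (_ : IsMSpan d T n ε K F), F.encard

/-- The topological entropy `h'_e(T)` of `T` on the quasi-metric space `(X,e)`,
via (primed) spanning sets.  Since `ε ↦ r'_n(ε,K,T)` is antitone, the limit as
`ε → 0` is the supremum over `ε > 0`. -/
noncomputable def entropy' (e : X → X → ℝ) (T : X → X) : EReal :=
  ⨆ (K : Set X) (_ : @IsCompact X (qtop e) K), ⨆ (ε : ℝ) (_ : 0 < ε),
    Filter.atTop.limsup fun n : ℕ =>
      ((n : ℝ)⁻¹ : EReal) * ENNReal.log ((spanCard e T n ε K : ℝ≥0∞))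

/-- The Bowen–Dinaburg topological entropy `h_d(T)` of `T` w.r.t. a metric `d`,
via spanning sets over compact subsets. -/
noncomputable def entropyM (d : X → X → ℝ) (T : X → X) : EReal :=
  ⨆ (K : Set X) (_ : @IsCompact X (mtop d) K), ⨆ (ε : ℝ) (_ : 0 < ε),
    Filter.atTop.limsup fun n : ℕ =>
      ((n : ℝ)⁻¹ : EReal) * ENNReal.log ((mSpanCard d T n ε K : ℝ≥0∞))

/-- The topological entropy `h''_e(T)` via (double-primed) spanning sets. -/
noncomputable def entropy'' (e : X → X → ℝ) (T : X → X) : EReal :=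
  ⨆ (K : Set X) (_ : @IsCompact X (qtop e) K), ⨆ (ε : ℝ) (_ : 0 < ε),
    Filter.atTop.limsup fun n : ℕ =>
      ((n : ℝ)⁻¹ : EReal) * ENNReal.log ((spanCardOr e T n ε K : ℝ≥0∞))



section Aux

variable {X : Type*}

lemma gen_open {S : Set (Set X)} {B : Set X}
    (h : ∀ y ∈ B, ∃ g, g ∈ S ∧ y ∈ g ∧ g ⊆ B) :
    @IsOpen X (TopologicalSpace.generateFrom S) B := by
  letI := TopologicalSpace.generateFrom S
  have hB : B = ⋃₀ {g | g ∈ S ∧ g ⊆ B} := by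
    ext y
    constructor
    · intro hy
      obtain ⟨g, hg, hyg, hgB⟩ := h y hy
      exact ⟨g, ⟨hg, hgB⟩, hyg⟩
    · rintro ⟨g, ⟨-, hgB⟩, hyg⟩
      exact hgB hyg
  rw [show B = ⋃₀ {g | g ∈ S ∧ g ⊆ B} from hB]
  exact isOpen_sUnion fun g hg => TopologicalSpace.GenerateOpen.basic g hg.1

lemma qtop_eq_mtop (e d : X → X → ℝ) (he : IsQuasiMetric e)
    (hd : ∀ x y, d x y = (e x y + e y x) / 2) : qtop e = mtop d := by
  obtain ⟨he0, heq, htri⟩ := he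
  have hd0 : ∀ x y, 0 ≤ d x y := fun x y => by
    rw [hd]; have := he0 x y; have := he0 y x; linarith
  have hdtri : ∀ x y z, d x z ≤ d x y + d y z := fun x y z => by
    rw [hd, hd, hd]
    have h1 := htri x y z
    have h2 := htri z y x
    linarith
  have hself : ∀ x, e x x = 0 := fun x => (heq x x).mpr rfl
  apply le_antisymm
  · -- qtop e ≤ mtop d : every mtop generator is qtop-open
    apply le_generateFrom
    rintro B ⟨x, ε, hε, rfl⟩
    apply gen_open
    intro y hy
    simp only [Set.mem_setOf_eq] at hy
    refine ⟨qball e y (ε - d x y), ⟨y, ε - d x y, by linarith, rfl⟩, ?_, ?_⟩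
    · exact ⟨by rw [hself]; linarith, by rw [hself]; linarith⟩
    · rintro z ⟨h1, h2⟩
      have hdyz : d y z < ε - d x y := by rw [hd]; linarith
      have := hdtri x y z
      simp only [Set.mem_setOf_eq]
      linarith
  · -- mtop d ≤ qtop e : every qtop generator is mtop-open
    apply le_generateFrom
    rintro B ⟨x, ε, hε, rfl⟩
    apply gen_open
    intro y hy
    obtain ⟨hy1, hy2⟩ := hy
    set δ : ℝ := min (ε - e x y) (ε - e y x) with hδ
    have hδpos : 0 < δ := lt_min (by linarith) (by linarith)
    refine ⟨{z | d y z < δ / 2}, ⟨y, δ / 2, by linarith, rfl⟩, ?_, ?_⟩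
    · show d y y < δ / 2
      rw [hd, hself]; linarith
    · rintro z (hz : d y z < δ / 2)
      rw [hd] at hz
      have hyz : e y z < δ := by have := he0 z y; linarith
      have hzy : e z y < δ := by have := he0 y z; linarith
      have hxz := htri x y z
      have hzx := htri z y x
      have hδ1 : δ ≤ ε - e x y := min_le_left _ _
      have hδ2 : δ ≤ ε - e y x := min_le_right _ _
      exact ⟨by linarith, by linarith⟩

lemma dynDist_nonneg {e : X → X → ℝ} (he0 : ∀ x y, 0 ≤ e x y) (T : X → X) (n : ℕ) (x y : X) :
    0 ≤ dynDist e T n x y :=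
  Real.iSup_nonneg fun i => he0 _ _

lemma le_dynDist (e : X → X → ℝ) (T : X → X) {n : ℕ} (i : Fin n) (x y : X) :
    e (T^[(i : ℕ)] x) (T^[(i : ℕ)] y) ≤ dynDist e T n x y :=
  le_ciSup (f := fun j : Fin n => e (T^[(j : ℕ)] x) (T^[(j : ℕ)] y))
    (Set.finite_range _).bddAbove i

lemma dynDist_d_le {e d : X → X → ℝ} (hd : ∀ x y, d x y = (e x y + e y x) / 2)
    {T : X → X} {n : ℕ} {x y : X} {ε : ℝ} (hε : 0 ≤ ε)
    (h1 : dynDist e T n x y ≤ ε) (h2 : dynDist e T n y x ≤ ε) :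
    dynDist d T n x y ≤ ε := by
  refine Real.iSup_le (fun i => ?_) hε
  rw [hd]
  have a1 := (le_dynDist e T i x y).trans h1
  have a2 := (le_dynDist e T i y x).trans h2
  linarith

lemma dynDist_e_le {e d : X → X → ℝ} (he0 : ∀ x y, 0 ≤ e x y)
    (hd : ∀ x y, d x y = (e x y + e y x) / 2)
    {T : X → X} {n : ℕ} {x y : X} {ε : ℝ} (hε : 0 ≤ ε)
    (h : dynDist d T n x y ≤ ε / 2) :
    dynDist e T n x y ≤ ε ∧ dynDist e T n y x ≤ ε := by
  constructor
  · refine Real.iSup_le (fun i => ?_) hε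
    have a := (le_dynDist d T i x y).trans h
    rw [hd] at a
    have := he0 (T^[(i : ℕ)] y) (T^[(i : ℕ)] x)
    linarith
  · refine Real.iSup_le (fun i => ?_) hε
    have a := (le_dynDist d T i x y).trans h
    rw [hd] at a
    have := he0 (T^[(i : ℕ)] x) (T^[(i : ℕ)] y)
    linarith

lemma mSpanCard_le_spanCard {e d : X → X → ℝ} (hd : ∀ x y, d x y = (e x y + e y x) / 2)
    (he0 : ∀ x y, 0 ≤ e x y) (T : X → X) (n : ℕ) {ε : ℝ} (hε : 0 ≤ ε) (K : Set X) :
    mSpanCard d T n ε K ≤ spanCard e T n ε K := by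
  refine le_iInf₂ fun F hF => iInf₂_le F fun x hx => ?_
  obtain ⟨y, hy, h1, h2⟩ := hF x hx
  exact ⟨y, hy, dynDist_d_le hd hε h1 h2⟩

lemma spanCard_le_mSpanCard {e d : X → X → ℝ} (hd : ∀ x y, d x y = (e x y + e y x) / 2)
    (he0 : ∀ x y, 0 ≤ e x y) (T : X → X) (n : ℕ) {ε : ℝ} (hε : 0 ≤ ε) (K : Set X) :
    spanCard e T n ε K ≤ mSpanCard d T n (ε / 2) K := by
  refine le_iInf₂ fun F hF => iInf₂_le F fun x hx => ?_
  obtain ⟨y, hy, h1⟩ := hF x hx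
  obtain ⟨a, b⟩ := dynDist_e_le he0 hd hε h1
  exact ⟨y, hy, a, b⟩

end Aux

/-- `h_{d_e}(T) = h'_e(T)`. -/
theorem stmt13 (e d : X → X → ℝ) (T : X → X) (he : IsQuasiMetric e)
    (hT : @Continuous X X (qtop e) (qtop e) T)
    (hd : ∀ x y, d x y = (e x y + e y x) / 2) :
    entropyM d T = entropy' e T := by
  obtain ⟨he0, heq, htri⟩ := he
  have htop : qtop e = mtop d := qtop_eq_mtop e d ⟨he0, heq, htri⟩ hd
  unfold entropyM entropy'
  rw [htop]
  refine iSup_congr fun K => iSup_congr fun _ => ?_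
  have hinv : ∀ n : ℕ, (0 : EReal) ≤ ((n : ℝ)⁻¹ : EReal) := fun n =>
    EReal.coe_nonneg.mpr (by positivity)
  apply le_antisymm
  · refine iSup₂_le fun ε hε => le_iSup₂_of_le ε hε ?_
    refine limsup_le_limsup (Filter.Eventually.of_forall fun n => ?_)
    refine mul_le_mul_of_nonneg_left ?_ (hinv n)
    rw [ENNReal.log_le_log_iff]
    exact ENat.toENNReal_le.mpr (mSpanCard_le_spanCard hd he0 T n hε.le K)
  · refine iSup₂_le fun ε hε => le_iSup₂_of_le (ε / 2) (by linarith) ?_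
    refine limsup_le_limsup (Filter.Eventually.of_forall fun n => ?_)
    refine mul_le_mul_of_nonneg_left ?_ (hinv n)
    rw [ENNReal.log_le_log_iff]
    exact ENat.toENNReal_le.mpr (spanCard_le_mSpanCard hd he0 T n hε.le K)
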